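/- arXiv:1810.05747 — 2 statements merged into one kernel-verified Lean document; each statement's English description precedes it below -/
import Mathlib

section
/- (Arnold's lemma) For distinct complex numbers considerations: the 1-forms ω_ij = d log(z_i - z_j) on configuration space satisfy ω_ij ∧ ω_jk + ω_jk ∧ ω_ki + ω_ki ∧ ω_ij = 0 for any three distinct indices i, j, k. Equivalently, as an identity of rational differential 2-forms: d(z_i - z_j)/(z_i - z_j) ∧ d(z_j - z_k)/(z_j - z_k) + d(z_j - z_k)/(z_j - z_k) ∧ d(z_k - z_i)/(z_k - z_i) + d(z_k - z_i)/(z_k - z_i) ∧ d(z_i - z_j)/(z_i - z_j) = 0. -/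
/-!
Write `a, b, c` for `z_i − z_j, z_j − z_k, z_k − z_i` and `da, db, dc` for their differentials.
Since `da + db + dc = 0`, the three wedge products `da ∧ db`, `db ∧ dc`, `dc ∧ da` coincide, so the
cyclic sum equals `(1/(ab) + 1/(bc) + 1/(ca)) da ∧ db = (a + b + c)/(abc) · da ∧ db`, which vanishes
because `a + b + c = 0`.
-/

/-- The (constant-coefficient-at-a-point) 1-form `ω_ab = (dz_a − dz_b)/(z_a − z_b)`
evaluated at the point `z`, as a linear functional on tangent vectors. -/
noncomputable def omegaForm {n : ℕ} (z : Fin n → ℂ) (a b : Fin n) : (Fin n → ℂ) → ℂ :=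
  fun v => (v a - v b) / (z a - z b)

/-- The wedge product of two 1-forms, as an alternating bilinear expression. -/
def wedge {n : ℕ} (α β : (Fin n → ℂ) → ℂ) : (Fin n → ℂ) → (Fin n → ℂ) → ℂ :=
  fun u v => α u * β v - α v * β u

theorem inv_mul_inv_add_inv_mul_inv_add_inv_mul_inv_eq_zero {K : Type*} [Field K] {a b c : K}
    (ha : a ≠ 0) (hb : b ≠ 0) (hc : c ≠ 0) (h : a + b + c = 0) :
    a⁻¹ * b⁻¹ + b⁻¹ * c⁻¹ + c⁻¹ * a⁻¹ = 0 :=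
  calc a⁻¹ * b⁻¹ + b⁻¹ * c⁻¹ + c⁻¹ * a⁻¹ = (a + b + c) / (a * b * c) := by field_simp; ring
    _ = 0 := by rw [h, zero_div]

section Wedge

variable {n : ℕ} (α β γ : (Fin n → ℂ) → ℂ) (u v : Fin n → ℂ)

theorem wedge_smul_smul (c d : ℂ) : wedge (c • α) (d • β) u v = c * d * wedge α β u v := by
  simp only [wedge, Pi.smul_apply, smul_eq_mul]
  ring

variable {α β γ}

theorem wedge_eq_of_add_add_eq_zero (h : α + β + γ = 0) :
    wedge β γ u v = wedge α β u v ∧ wedge γ α u v = wedge α β u v := by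
  have hγ (w : Fin n → ℂ) : γ w = -α w - β w := by
    linear_combination (by simpa using congrFun h w : α w + β w + γ w = 0)
  simp only [wedge, hγ]
  constructor <;> ring

end Wedge

def coordDiff {n : ℕ} (a b : Fin n) : (Fin n → ℂ) → ℂ :=
  fun v => v a - v b

theorem omegaForm_eq_inv_smul_coordDiff {n : ℕ} (z : Fin n → ℂ) (a b : Fin n) :
    omegaForm z a b = (z a - z b)⁻¹ • coordDiff a b := by
  ext v
  simp only [omegaForm, coordDiff, Pi.smul_apply, smul_eq_mul, div_eq_inv_mul]

theorem coordDiff_add_coordDiff_add_coordDiff {n : ℕ} (i j k : Fin n) :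
    coordDiff i j + coordDiff j k + coordDiff k i = 0 := by
  ext v
  simp only [coordDiff, Pi.add_apply, Pi.zero_apply]
  ring

/-- Arnold's lemma: `ω_ij ∧ ω_jk + ω_jk ∧ ω_ki + ω_ki ∧ ω_ij = 0` at every point of the
configuration space where `z_i, z_j, z_k` are pairwise distinct. -/
theorem arnold_lemma {n : ℕ} (z : Fin n → ℂ) (i j k : Fin n)
    (hij : z i ≠ z j) (hjk : z j ≠ z k) (hki : z k ≠ z i)
    (u v : Fin n → ℂ) :
    wedge (omegaForm z i j) (omegaForm z j k) u v
      + wedge (omegaForm z j k) (omegaForm z k i) u v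
      + wedge (omegaForm z k i) (omegaForm z i j) u v = 0 := by
  obtain ⟨hjk_ij, hki_ij⟩ :=
    wedge_eq_of_add_add_eq_zero u v (coordDiff_add_coordDiff_add_coordDiff i j k)
  have hcoeff : (z i - z j)⁻¹ * (z j - z k)⁻¹ + (z j - z k)⁻¹ * (z k - z i)⁻¹
      + (z k - z i)⁻¹ * (z i - z j)⁻¹ = 0 :=
    inv_mul_inv_add_inv_mul_inv_add_inv_mul_inv_eq_zero (sub_ne_zero.2 hij) (sub_ne_zero.2 hjk)
      (sub_ne_zero.2 hki) (by ring)
  simp only [omegaForm_eq_inv_smul_coordDiff, wedge_smul_smul, hjk_ij, hki_ij]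
  rw [← add_mul, ← add_mul, hcoeff, zero_mul]
end

section
/- The 16 × 15 matrix M₁ from the 16T/28T relations in Vassiliev's spectral sequence has rank 10; consequently the kernel of its transpose is 6-dimensional, and it is spanned by the six explicitly listed vectors: (0,0,0,0,1,1,1,1,0,0,0,0,0,0,0,0), (0,0,0,0,0,0,0,0,1,1,1,1,0,0,0,0), (0,0,0,0,0,0,0,0,0,0,0,0,1,−1,1,−1), (1,1,0,0,0,0,1,1,−1,0,0,0,1,0,0,0), (0,1,1,0,0,0,0,1,0,0,1,1,0,1,0,0), (0,0,1,1,0,1,0,1,0,0,0,1,0,0,1,0). -/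
set_option maxRecDepth 20000
set_option maxHeartbeats 1600000

/-- The 16 × 15 matrix `M₁` of the 16T/28T relations in Vassiliev's spectral sequence. -/
def M16T : Matrix (Fin 16) (Fin 15) ℚ :=
  Matrix.of
    ![![-1,0,0,-1,0,0,-1,0,0,0,0,0,0,0,0],
      ![0,-1,0,0,-1,0,0,0,0,-1,0,0,0,0,0],
      ![0,0,1,0,0,0,0,-1,0,0,1,0,0,0,0],
      ![0,0,0,0,0,1,0,0,1,0,0,-1,0,0,0],
      ![0,0,0,0,0,1,-1,0,0,0,0,0,1,0,0],
      ![0,0,0,0,0,-1,0,0,0,-1,0,0,0,0,-1],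
      ![0,0,1,0,0,0,1,0,0,0,0,0,0,0,1],
      ![0,0,-1,0,0,0,0,0,0,1,0,0,-1,0,0],
      ![-1,0,0,0,-1,0,0,0,0,0,0,0,-1,0,0],
      ![1,0,0,0,0,0,0,-1,0,0,0,0,0,-1,0],
      ![0,0,0,0,1,0,0,0,0,0,0,-1,0,1,0],
      ![0,0,0,0,0,0,0,1,0,0,0,1,1,0,0],
      ![0,1,0,1,0,0,0,0,0,0,0,0,0,0,-1],
      ![0,1,0,0,0,0,0,0,0,0,-1,0,0,-1,0],
      ![0,0,0,0,0,0,0,0,-1,0,-1,0,0,0,1],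
      ![0,0,0,1,0,0,0,0,-1,0,0,0,0,1,0]]

private lemma ev16_0 {α : Type*} (a0 a1 a2 a3 a4 a5 a6 a7 a8 a9 a10 a11 a12 a13 a14 a15 : α) :
    (![a0, a1, a2, a3, a4, a5, a6, a7, a8, a9, a10, a11, a12, a13, a14, a15] : Fin 16 → α) 0 = a0 := rfl
private lemma ev16_1 {α : Type*} (a0 a1 a2 a3 a4 a5 a6 a7 a8 a9 a10 a11 a12 a13 a14 a15 : α) :
    (![a0, a1, a2, a3, a4, a5, a6, a7, a8, a9, a10, a11, a12, a13, a14, a15] : Fin 16 → α) 1 = a1 := rfl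
private lemma ev16_2 {α : Type*} (a0 a1 a2 a3 a4 a5 a6 a7 a8 a9 a10 a11 a12 a13 a14 a15 : α) :
    (![a0, a1, a2, a3, a4, a5, a6, a7, a8, a9, a10, a11, a12, a13, a14, a15] : Fin 16 → α) 2 = a2 := rfl
private lemma ev16_3 {α : Type*} (a0 a1 a2 a3 a4 a5 a6 a7 a8 a9 a10 a11 a12 a13 a14 a15 : α) :
    (![a0, a1, a2, a3, a4, a5, a6, a7, a8, a9, a10, a11, a12, a13, a14, a15] : Fin 16 → α) 3 = a3 := rfl
private lemma ev16_4 {α : Type*} (a0 a1 a2 a3 a4 a5 a6 a7 a8 a9 a10 a11 a12 a13 a14 a15 : α) :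
    (![a0, a1, a2, a3, a4, a5, a6, a7, a8, a9, a10, a11, a12, a13, a14, a15] : Fin 16 → α) 4 = a4 := rfl
private lemma ev16_5 {α : Type*} (a0 a1 a2 a3 a4 a5 a6 a7 a8 a9 a10 a11 a12 a13 a14 a15 : α) :
    (![a0, a1, a2, a3, a4, a5, a6, a7, a8, a9, a10, a11, a12, a13, a14, a15] : Fin 16 → α) 5 = a5 := rfl
private lemma ev16_6 {α : Type*} (a0 a1 a2 a3 a4 a5 a6 a7 a8 a9 a10 a11 a12 a13 a14 a15 : α) :
    (![a0, a1, a2, a3, a4, a5, a6, a7, a8, a9, a10, a11, a12, a13, a14, a15] : Fin 16 → α) 6 = a6 := rfl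
private lemma ev16_7 {α : Type*} (a0 a1 a2 a3 a4 a5 a6 a7 a8 a9 a10 a11 a12 a13 a14 a15 : α) :
    (![a0, a1, a2, a3, a4, a5, a6, a7, a8, a9, a10, a11, a12, a13, a14, a15] : Fin 16 → α) 7 = a7 := rfl
private lemma ev16_8 {α : Type*} (a0 a1 a2 a3 a4 a5 a6 a7 a8 a9 a10 a11 a12 a13 a14 a15 : α) :
    (![a0, a1, a2, a3, a4, a5, a6, a7, a8, a9, a10, a11, a12, a13, a14, a15] : Fin 16 → α) 8 = a8 := rfl
private lemma ev16_9 {α : Type*} (a0 a1 a2 a3 a4 a5 a6 a7 a8 a9 a10 a11 a12 a13 a14 a15 : α) :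
    (![a0, a1, a2, a3, a4, a5, a6, a7, a8, a9, a10, a11, a12, a13, a14, a15] : Fin 16 → α) 9 = a9 := rfl
private lemma ev16_10 {α : Type*} (a0 a1 a2 a3 a4 a5 a6 a7 a8 a9 a10 a11 a12 a13 a14 a15 : α) :
    (![a0, a1, a2, a3, a4, a5, a6, a7, a8, a9, a10, a11, a12, a13, a14, a15] : Fin 16 → α) 10 = a10 := rfl
private lemma ev16_11 {α : Type*} (a0 a1 a2 a3 a4 a5 a6 a7 a8 a9 a10 a11 a12 a13 a14 a15 : α) :
    (![a0, a1, a2, a3, a4, a5, a6, a7, a8, a9, a10, a11, a12, a13, a14, a15] : Fin 16 → α) 11 = a11 := rfl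
private lemma ev16_12 {α : Type*} (a0 a1 a2 a3 a4 a5 a6 a7 a8 a9 a10 a11 a12 a13 a14 a15 : α) :
    (![a0, a1, a2, a3, a4, a5, a6, a7, a8, a9, a10, a11, a12, a13, a14, a15] : Fin 16 → α) 12 = a12 := rfl
private lemma ev16_13 {α : Type*} (a0 a1 a2 a3 a4 a5 a6 a7 a8 a9 a10 a11 a12 a13 a14 a15 : α) :
    (![a0, a1, a2, a3, a4, a5, a6, a7, a8, a9, a10, a11, a12, a13, a14, a15] : Fin 16 → α) 13 = a13 := rfl
private lemma ev16_14 {α : Type*} (a0 a1 a2 a3 a4 a5 a6 a7 a8 a9 a10 a11 a12 a13 a14 a15 : α) :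
    (![a0, a1, a2, a3, a4, a5, a6, a7, a8, a9, a10, a11, a12, a13, a14, a15] : Fin 16 → α) 14 = a14 := rfl
private lemma ev16_15 {α : Type*} (a0 a1 a2 a3 a4 a5 a6 a7 a8 a9 a10 a11 a12 a13 a14 a15 : α) :
    (![a0, a1, a2, a3, a4, a5, a6, a7, a8, a9, a10, a11, a12, a13, a14, a15] : Fin 16 → α) 15 = a15 := rfl

private lemma ev15_0 {α : Type*} (a0 a1 a2 a3 a4 a5 a6 a7 a8 a9 a10 a11 a12 a13 a14 : α) :
    (![a0, a1, a2, a3, a4, a5, a6, a7, a8, a9, a10, a11, a12, a13, a14] : Fin 15 → α) 0 = a0 := rfl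
private lemma ev15_1 {α : Type*} (a0 a1 a2 a3 a4 a5 a6 a7 a8 a9 a10 a11 a12 a13 a14 : α) :
    (![a0, a1, a2, a3, a4, a5, a6, a7, a8, a9, a10, a11, a12, a13, a14] : Fin 15 → α) 1 = a1 := rfl
private lemma ev15_2 {α : Type*} (a0 a1 a2 a3 a4 a5 a6 a7 a8 a9 a10 a11 a12 a13 a14 : α) :
    (![a0, a1, a2, a3, a4, a5, a6, a7, a8, a9, a10, a11, a12, a13, a14] : Fin 15 → α) 2 = a2 := rfl
private lemma ev15_3 {α : Type*} (a0 a1 a2 a3 a4 a5 a6 a7 a8 a9 a10 a11 a12 a13 a14 : α) :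
    (![a0, a1, a2, a3, a4, a5, a6, a7, a8, a9, a10, a11, a12, a13, a14] : Fin 15 → α) 3 = a3 := rfl
private lemma ev15_4 {α : Type*} (a0 a1 a2 a3 a4 a5 a6 a7 a8 a9 a10 a11 a12 a13 a14 : α) :
    (![a0, a1, a2, a3, a4, a5, a6, a7, a8, a9, a10, a11, a12, a13, a14] : Fin 15 → α) 4 = a4 := rfl
private lemma ev15_5 {α : Type*} (a0 a1 a2 a3 a4 a5 a6 a7 a8 a9 a10 a11 a12 a13 a14 : α) :
    (![a0, a1, a2, a3, a4, a5, a6, a7, a8, a9, a10, a11, a12, a13, a14] : Fin 15 → α) 5 = a5 := rfl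
private lemma ev15_6 {α : Type*} (a0 a1 a2 a3 a4 a5 a6 a7 a8 a9 a10 a11 a12 a13 a14 : α) :
    (![a0, a1, a2, a3, a4, a5, a6, a7, a8, a9, a10, a11, a12, a13, a14] : Fin 15 → α) 6 = a6 := rfl
private lemma ev15_7 {α : Type*} (a0 a1 a2 a3 a4 a5 a6 a7 a8 a9 a10 a11 a12 a13 a14 : α) :
    (![a0, a1, a2, a3, a4, a5, a6, a7, a8, a9, a10, a11, a12, a13, a14] : Fin 15 → α) 7 = a7 := rfl
private lemma ev15_8 {α : Type*} (a0 a1 a2 a3 a4 a5 a6 a7 a8 a9 a10 a11 a12 a13 a14 : α) :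
    (![a0, a1, a2, a3, a4, a5, a6, a7, a8, a9, a10, a11, a12, a13, a14] : Fin 15 → α) 8 = a8 := rfl
private lemma ev15_9 {α : Type*} (a0 a1 a2 a3 a4 a5 a6 a7 a8 a9 a10 a11 a12 a13 a14 : α) :
    (![a0, a1, a2, a3, a4, a5, a6, a7, a8, a9, a10, a11, a12, a13, a14] : Fin 15 → α) 9 = a9 := rfl
private lemma ev15_10 {α : Type*} (a0 a1 a2 a3 a4 a5 a6 a7 a8 a9 a10 a11 a12 a13 a14 : α) :
    (![a0, a1, a2, a3, a4, a5, a6, a7, a8, a9, a10, a11, a12, a13, a14] : Fin 15 → α) 10 = a10 := rfl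
private lemma ev15_11 {α : Type*} (a0 a1 a2 a3 a4 a5 a6 a7 a8 a9 a10 a11 a12 a13 a14 : α) :
    (![a0, a1, a2, a3, a4, a5, a6, a7, a8, a9, a10, a11, a12, a13, a14] : Fin 15 → α) 11 = a11 := rfl
private lemma ev15_12 {α : Type*} (a0 a1 a2 a3 a4 a5 a6 a7 a8 a9 a10 a11 a12 a13 a14 : α) :
    (![a0, a1, a2, a3, a4, a5, a6, a7, a8, a9, a10, a11, a12, a13, a14] : Fin 15 → α) 12 = a12 := rfl
private lemma ev15_13 {α : Type*} (a0 a1 a2 a3 a4 a5 a6 a7 a8 a9 a10 a11 a12 a13 a14 : α) :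
    (![a0, a1, a2, a3, a4, a5, a6, a7, a8, a9, a10, a11, a12, a13, a14] : Fin 15 → α) 13 = a13 := rfl
private lemma ev15_14 {α : Type*} (a0 a1 a2 a3 a4 a5 a6 a7 a8 a9 a10 a11 a12 a13 a14 : α) :
    (![a0, a1, a2, a3, a4, a5, a6, a7, a8, a9, a10, a11, a12, a13, a14] : Fin 15 → α) 14 = a14 := rfl

private lemma ev6_0 {α : Type*} (a0 a1 a2 a3 a4 a5 : α) :
    (![a0, a1, a2, a3, a4, a5] : Fin 6 → α) 0 = a0 := rfl
private lemma ev6_1 {α : Type*} (a0 a1 a2 a3 a4 a5 : α) :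
    (![a0, a1, a2, a3, a4, a5] : Fin 6 → α) 1 = a1 := rfl
private lemma ev6_2 {α : Type*} (a0 a1 a2 a3 a4 a5 : α) :
    (![a0, a1, a2, a3, a4, a5] : Fin 6 → α) 2 = a2 := rfl
private lemma ev6_3 {α : Type*} (a0 a1 a2 a3 a4 a5 : α) :
    (![a0, a1, a2, a3, a4, a5] : Fin 6 → α) 3 = a3 := rfl
private lemma ev6_4 {α : Type*} (a0 a1 a2 a3 a4 a5 : α) :
    (![a0, a1, a2, a3, a4, a5] : Fin 6 → α) 4 = a4 := rfl
private lemma ev6_5 {α : Type*} (a0 a1 a2 a3 a4 a5 : α) :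
    (![a0, a1, a2, a3, a4, a5] : Fin 6 → α) 5 = a5 := rfl

private lemma sum16Q (f : Fin 16 → ℚ) :
    ∑ i, f i = f 0 + f 1 + f 2 + f 3 + f 4 + f 5 + f 6 + f 7 + f 8 + f 9 + f 10 + f 11 + f 12 + f 13 + f 14 + f 15 := by
  simp [Fin.sum_univ_succ]; ring_nf

private lemma M16T_ker_eq_span :
    LinearMap.ker M16T.transpose.mulVecLin
      = Submodule.span ℚ
          ({![0,0,0,0,1,1,1,1,0,0,0,0,0,0,0,0],
            ![0,0,0,0,0,0,0,0,1,1,1,1,0,0,0,0],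
            ![0,0,0,0,0,0,0,0,0,0,0,0,1,-1,1,-1],
            ![1,1,0,0,0,0,1,1,-1,0,0,0,1,0,0,0],
            ![0,1,1,0,0,0,0,1,0,0,1,1,0,1,0,0],
            ![0,0,1,1,0,1,0,1,0,0,0,1,0,0,1,0]} : Set (Fin 16 → ℚ)) := by
  apply le_antisymm
  · intro v hv
    have hv0 : M16T.transpose.mulVec v = 0 := LinearMap.mem_ker.mp hv
    have hv' : ∀ j : Fin 15, ∑ i, M16T i j * v i = 0 := by
      intro j
      simpa only [Matrix.mulVec, dotProduct, Matrix.transpose_apply, Pi.zero_apply]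
        using congrFun hv0 j
    have e0 := hv' 0
    have e1 := hv' 1
    have e2 := hv' 2
    have e3 := hv' 3
    have e4 := hv' 4
    have e5 := hv' 5
    have e6 := hv' 6
    have e7 := hv' 7
    have e8 := hv' 8
    have e9 := hv' 9
    have e10 := hv' 10
    have e11 := hv' 11
    have e12 := hv' 12
    have e13 := hv' 13
    have e14 := hv' 14
    rw [sum16Q] at e0 e1 e2 e3 e4 e5 e6 e7 e8 e9 e10 e11 e12 e13 e14
    simp only [M16T, Matrix.of_apply, ev16_0, ev16_1, ev16_2, ev16_3, ev16_4, ev16_5, ev16_6, ev16_7, ev16_8, ev16_9, ev16_10, ev16_11, ev16_12, ev16_13, ev16_14, ev16_15, ev15_0, ev15_1, ev15_2, ev15_3, ev15_4, ev15_5, ev15_6, ev15_7, ev15_8, ev15_9, ev15_10, ev15_11, ev15_12, ev15_13, ev15_14] at e0 e1 e2 e3 e4 e5 e6 e7 e8 e9 e10 e11 e12 e13 e14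
    norm_num at e0 e1 e2 e3 e4 e5 e6 e7 e8 e9 e10 e11 e12 e13 e14
    have h0 : v 0 = v 4 * (0 : ℚ) + (v 0 + v 8) * (0 : ℚ) + (v 12 - v 0) * (0 : ℚ) + v 0 * (1 : ℚ) + (v 1 - v 0) * (0 : ℚ) + (v 0 - v 1 + v 2) * (0 : ℚ) := by linarith [e0, e1, e2, e3, e4, e5, e6, e7, e8, e9, e10, e11, e12, e13, e14]
    have h1 : v 1 = v 4 * (0 : ℚ) + (v 0 + v 8) * (0 : ℚ) + (v 12 - v 0) * (0 : ℚ) + v 0 * (1 : ℚ) + (v 1 - v 0) * (1 : ℚ) + (v 0 - v 1 + v 2) * (0 : ℚ) := by linarith [e0, e1, e2, e3, e4, e5, e6, e7, e8, e9, e10, e11, e12, e13, e14]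
    have h2 : v 2 = v 4 * (0 : ℚ) + (v 0 + v 8) * (0 : ℚ) + (v 12 - v 0) * (0 : ℚ) + v 0 * (0 : ℚ) + (v 1 - v 0) * (1 : ℚ) + (v 0 - v 1 + v 2) * (1 : ℚ) := by linarith [e0, e1, e2, e3, e4, e5, e6, e7, e8, e9, e10, e11, e12, e13, e14]
    have h3 : v 3 = v 4 * (0 : ℚ) + (v 0 + v 8) * (0 : ℚ) + (v 12 - v 0) * (0 : ℚ) + v 0 * (0 : ℚ) + (v 1 - v 0) * (0 : ℚ) + (v 0 - v 1 + v 2) * (1 : ℚ) := by linarith [e0, e1, e2, e3, e4, e5, e6, e7, e8, e9, e10, e11, e12, e13, e14]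
    have h4 : v 4 = v 4 * (1 : ℚ) + (v 0 + v 8) * (0 : ℚ) + (v 12 - v 0) * (0 : ℚ) + v 0 * (0 : ℚ) + (v 1 - v 0) * (0 : ℚ) + (v 0 - v 1 + v 2) * (0 : ℚ) := by linarith [e0, e1, e2, e3, e4, e5, e6, e7, e8, e9, e10, e11, e12, e13, e14]
    have h5 : v 5 = v 4 * (1 : ℚ) + (v 0 + v 8) * (0 : ℚ) + (v 12 - v 0) * (0 : ℚ) + v 0 * (0 : ℚ) + (v 1 - v 0) * (0 : ℚ) + (v 0 - v 1 + v 2) * (1 : ℚ) := by linarith [e0, e1, e2, e3, e4, e5, e6, e7, e8, e9, e10, e11, e12, e13, e14]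
    have h6 : v 6 = v 4 * (1 : ℚ) + (v 0 + v 8) * (0 : ℚ) + (v 12 - v 0) * (0 : ℚ) + v 0 * (1 : ℚ) + (v 1 - v 0) * (0 : ℚ) + (v 0 - v 1 + v 2) * (0 : ℚ) := by linarith [e0, e1, e2, e3, e4, e5, e6, e7, e8, e9, e10, e11, e12, e13, e14]
    have h7 : v 7 = v 4 * (1 : ℚ) + (v 0 + v 8) * (0 : ℚ) + (v 12 - v 0) * (0 : ℚ) + v 0 * (1 : ℚ) + (v 1 - v 0) * (1 : ℚ) + (v 0 - v 1 + v 2) * (1 : ℚ) := by linarith [e0, e1, e2, e3, e4, e5, e6, e7, e8, e9, e10, e11, e12, e13, e14]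
    have h8 : v 8 = v 4 * (0 : ℚ) + (v 0 + v 8) * (1 : ℚ) + (v 12 - v 0) * (0 : ℚ) + v 0 * (-1 : ℚ) + (v 1 - v 0) * (0 : ℚ) + (v 0 - v 1 + v 2) * (0 : ℚ) := by linarith [e0, e1, e2, e3, e4, e5, e6, e7, e8, e9, e10, e11, e12, e13, e14]
    have h9 : v 9 = v 4 * (0 : ℚ) + (v 0 + v 8) * (1 : ℚ) + (v 12 - v 0) * (0 : ℚ) + v 0 * (0 : ℚ) + (v 1 - v 0) * (0 : ℚ) + (v 0 - v 1 + v 2) * (0 : ℚ) := by linarith [e0, e1, e2, e3, e4, e5, e6, e7, e8, e9, e10, e11, e12, e13, e14]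
    have h10 : v 10 = v 4 * (0 : ℚ) + (v 0 + v 8) * (1 : ℚ) + (v 12 - v 0) * (0 : ℚ) + v 0 * (0 : ℚ) + (v 1 - v 0) * (1 : ℚ) + (v 0 - v 1 + v 2) * (0 : ℚ) := by linarith [e0, e1, e2, e3, e4, e5, e6, e7, e8, e9, e10, e11, e12, e13, e14]
    have h11 : v 11 = v 4 * (0 : ℚ) + (v 0 + v 8) * (1 : ℚ) + (v 12 - v 0) * (0 : ℚ) + v 0 * (0 : ℚ) + (v 1 - v 0) * (1 : ℚ) + (v 0 - v 1 + v 2) * (1 : ℚ) := by linarith [e0, e1, e2, e3, e4, e5, e6, e7, e8, e9, e10, e11, e12, e13, e14]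
    have h12 : v 12 = v 4 * (0 : ℚ) + (v 0 + v 8) * (0 : ℚ) + (v 12 - v 0) * (1 : ℚ) + v 0 * (1 : ℚ) + (v 1 - v 0) * (0 : ℚ) + (v 0 - v 1 + v 2) * (0 : ℚ) := by linarith [e0, e1, e2, e3, e4, e5, e6, e7, e8, e9, e10, e11, e12, e13, e14]
    have h13 : v 13 = v 4 * (0 : ℚ) + (v 0 + v 8) * (0 : ℚ) + (v 12 - v 0) * (-1 : ℚ) + v 0 * (0 : ℚ) + (v 1 - v 0) * (1 : ℚ) + (v 0 - v 1 + v 2) * (0 : ℚ) := by linarith [e0, e1, e2, e3, e4, e5, e6, e7, e8, e9, e10, e11, e12, e13, e14]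
    have h14 : v 14 = v 4 * (0 : ℚ) + (v 0 + v 8) * (0 : ℚ) + (v 12 - v 0) * (1 : ℚ) + v 0 * (0 : ℚ) + (v 1 - v 0) * (0 : ℚ) + (v 0 - v 1 + v 2) * (1 : ℚ) := by linarith [e0, e1, e2, e3, e4, e5, e6, e7, e8, e9, e10, e11, e12, e13, e14]
    have h15 : v 15 = v 4 * (0 : ℚ) + (v 0 + v 8) * (0 : ℚ) + (v 12 - v 0) * (-1 : ℚ) + v 0 * (0 : ℚ) + (v 1 - v 0) * (0 : ℚ) + (v 0 - v 1 + v 2) * (0 : ℚ) := by linarith [e0, e1, e2, e3, e4, e5, e6, e7, e8, e9, e10, e11, e12, e13, e14]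
    have hrepr : v = v 4 • (![0,0,0,0,1,1,1,1,0,0,0,0,0,0,0,0] : Fin 16 → ℚ) + (v 0 + v 8) • (![0,0,0,0,0,0,0,0,1,1,1,1,0,0,0,0] : Fin 16 → ℚ) + (v 12 - v 0) • (![0,0,0,0,0,0,0,0,0,0,0,0,1,-1,1,-1] : Fin 16 → ℚ) + v 0 • (![1,1,0,0,0,0,1,1,-1,0,0,0,1,0,0,0] : Fin 16 → ℚ) + (v 1 - v 0) • (![0,1,1,0,0,0,0,1,0,0,1,1,0,1,0,0] : Fin 16 → ℚ) + (v 0 - v 1 + v 2) • (![0,0,1,1,0,1,0,1,0,0,0,1,0,0,1,0] : Fin 16 → ℚ) := by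
      funext x
      fin_cases x
      · exact h0
      · exact h1
      · exact h2
      · exact h3
      · exact h4
      · exact h5
      · exact h6
      · exact h7
      · exact h8
      · exact h9
      · exact h10
      · exact h11
      · exact h12
      · exact h13
      · exact h14
      · exact h15
    rw [hrepr]
    exact Submodule.add_mem _ (Submodule.add_mem _ (Submodule.add_mem _ (Submodule.add_mem _ (Submodule.add_mem _ (Submodule.smul_mem _ _ (Submodule.subset_span (Set.mem_insert _ _))) (Submodule.smul_mem _ _ (Submodule.subset_span (Set.mem_insert_of_mem _ (Set.mem_insert _ _))))) (Submodule.smul_mem _ _ (Submodule.subset_span (Set.mem_insert_of_mem _ (Set.mem_insert_of_mem _ (Set.mem_insert _ _)))))) (Submodule.smul_mem _ _ (Submodule.subset_span (Set.mem_insert_of_mem _ (Set.mem_insert_of_mem _ (Set.mem_insert_of_mem _ (Set.mem_insert _ _))))))) (Submodule.smul_mem _ _ (Submodule.subset_span (Set.mem_insert_of_mem _ (Set.mem_insert_of_mem _ (Set.mem_insert_of_mem _ (Set.mem_insert_of_mem _ (Set.mem_insert _ _)))))))) (Submodule.smul_mem _ _ (Submodule.subset_span (Set.mem_insert_of_mem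 _ (Set.mem_insert_of_mem _ (Set.mem_insert_of_mem _ (Set.mem_insert_of_mem _ (Set.mem_insert_of_mem _ (Set.mem_singleton _))))))))
  · rw [Submodule.span_le]
    rintro x hx
    simp only [Set.mem_insert_iff, Set.mem_singleton_iff] at hx
    rcases hx with rfl | rfl | rfl | rfl | rfl | rfl <;>
    · refine LinearMap.mem_ker.mpr ?_
      ext j
      fin_cases j <;>
        norm_num [Matrix.mulVecLin_apply, Matrix.mulVec, dotProduct, M16T,
          Fin.sum_univ_succ]

private lemma M16T_indep : LinearIndependent ℚ
      ![(![0,0,0,0,1,1,1,1,0,0,0,0,0,0,0,0] : Fin 16 → ℚ),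
        ![0,0,0,0,0,0,0,0,1,1,1,1,0,0,0,0],
        ![0,0,0,0,0,0,0,0,0,0,0,0,1,-1,1,-1],
        ![1,1,0,0,0,0,1,1,-1,0,0,0,1,0,0,0],
        ![0,1,1,0,0,0,0,1,0,0,1,1,0,1,0,0],
        ![0,0,1,1,0,1,0,1,0,0,0,1,0,0,1,0]] := by
  rw [Fintype.linearIndependent_iff]
  intro g hg
  have h0 := congrFun hg 0
  have h1 := congrFun hg 1
  have h2 := congrFun hg 2
  have h4 := congrFun hg 4
  have h8 := congrFun hg 8
  have h12 := congrFun hg 12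
  simp only [Finset.sum_apply, Pi.smul_apply, smul_eq_mul, Fin.sum_univ_six,
    ev16_0, ev16_1, ev16_2, ev16_3, ev16_4, ev16_5, ev16_6, ev16_7, ev16_8, ev16_9, ev16_10, ev16_11, ev16_12, ev16_13, ev16_14, ev16_15, ev6_0, ev6_1, ev6_2, ev6_3, ev6_4, ev6_5, Pi.zero_apply] at h0 h1 h2 h4 h8 h12
  have z0 : g 0 = 0 := by linarith
  have z1 : g 1 = 0 := by linarith
  have z2 : g 2 = 0 := by linarith
  have z3 : g 3 = 0 := by linarith
  have z4 : g 4 = 0 := by linarith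
  have z5 : g 5 = 0 := by linarith
  intro i; fin_cases i <;> assumption

private lemma M16T_set_eq_range :
    ({![0,0,0,0,1,1,1,1,0,0,0,0,0,0,0,0],
            ![0,0,0,0,0,0,0,0,1,1,1,1,0,0,0,0],
            ![0,0,0,0,0,0,0,0,0,0,0,0,1,-1,1,-1],
            ![1,1,0,0,0,0,1,1,-1,0,0,0,1,0,0,0],
            ![0,1,1,0,0,0,0,1,0,0,1,1,0,1,0,0],
            ![0,0,1,1,0,1,0,1,0,0,0,1,0,0,1,0]} : Set (Fin 16 → ℚ))
      = Set.range ![(![0,0,0,0,1,1,1,1,0,0,0,0,0,0,0,0] : Fin 16 → ℚ),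
        ![0,0,0,0,0,0,0,0,1,1,1,1,0,0,0,0],
        ![0,0,0,0,0,0,0,0,0,0,0,0,1,-1,1,-1],
        ![1,1,0,0,0,0,1,1,-1,0,0,0,1,0,0,0],
        ![0,1,1,0,0,0,0,1,0,0,1,1,0,1,0,0],
        ![0,0,1,1,0,1,0,1,0,0,0,1,0,0,1,0]] := by
  ext x
  simp only [Set.mem_insert_iff, Set.mem_singleton_iff, Set.mem_range]
  constructor
  · rintro (rfl | rfl | rfl | rfl | rfl | rfl)
    exacts [⟨0, rfl⟩, ⟨1, rfl⟩, ⟨2, rfl⟩, ⟨3, rfl⟩, ⟨4, rfl⟩, ⟨5, rfl⟩]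
  · rintro ⟨i, rfl⟩
    fin_cases i
    · exact Or.inl rfl
    · exact Or.inr (Or.inl rfl)
    · exact Or.inr (Or.inr (Or.inl rfl))
    · exact Or.inr (Or.inr (Or.inr (Or.inl rfl)))
    · exact Or.inr (Or.inr (Or.inr (Or.inr (Or.inl rfl))))
    · exact Or.inr (Or.inr (Or.inr (Or.inr (Or.inr rfl))))

private lemma M16T_ker_finrank :
    Module.finrank ℚ (LinearMap.ker M16T.transpose.mulVecLin) = 6 := by
  rw [M16T_ker_eq_span, M16T_set_eq_range, finrank_span_eq_card M16T_indep]
  simp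

/-- `M₁` has rank 10; consequently the kernel of its transpose is 6-dimensional, and it is
spanned by the six listed vectors, which are linearly independent (hence form a basis). -/
theorem M16T_rank_and_kernel :
    M16T.rank = 10 ∧
    Module.finrank ℚ (LinearMap.ker M16T.transpose.mulVecLin) = 6 ∧
    LinearMap.ker M16T.transpose.mulVecLin
      = Submodule.span ℚ
          ({![0,0,0,0,1,1,1,1,0,0,0,0,0,0,0,0],
            ![0,0,0,0,0,0,0,0,1,1,1,1,0,0,0,0],
            ![0,0,0,0,0,0,0,0,0,0,0,0,1,-1,1,-1],
            ![1,1,0,0,0,0,1,1,-1,0,0,0,1,0,0,0],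
            ![0,1,1,0,0,0,0,1,0,0,1,1,0,1,0,0],
            ![0,0,1,1,0,1,0,1,0,0,0,1,0,0,1,0]} : Set (Fin 16 → ℚ)) ∧
    LinearIndependent ℚ
      ![(![0,0,0,0,1,1,1,1,0,0,0,0,0,0,0,0] : Fin 16 → ℚ),
        ![0,0,0,0,0,0,0,0,1,1,1,1,0,0,0,0],
        ![0,0,0,0,0,0,0,0,0,0,0,0,1,-1,1,-1],
        ![1,1,0,0,0,0,1,1,-1,0,0,0,1,0,0,0],
        ![0,1,1,0,0,0,0,1,0,0,1,1,0,1,0,0],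
        ![0,0,1,1,0,1,0,1,0,0,0,1,0,0,1,0]] := by
  refine ⟨?_, M16T_ker_finrank, M16T_ker_eq_span, M16T_indep⟩
  have hrn := LinearMap.finrank_range_add_finrank_ker M16T.transpose.mulVecLin
  have hdom : Module.finrank ℚ (Fin 16 → ℚ) = 16 := by simp
  have hT : M16T.transpose.rank = 10 := by
    have hr : M16T.transpose.rank
        = Module.finrank ℚ (LinearMap.range M16T.transpose.mulVecLin) := rfl
    rw [hr]
    rw [hdom, M16T_ker_finrank] at hrn
    omega
  rw [← Matrix.rank_transpose]
  exact hT
end
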